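/- arXiv:2409.00462 — 5 statements merged into one kernel-verified Lean document; each statement's English description precedes it below -/
import Mathlib

section
/- The bilinear bracket on the 5-dimensional real vector space with basis e1,...,e5 defined by [e1,e2]=-e3, [e4,e2]=-e1, [e4,e1]=e2, [e5,e1]=-e1+e3, [e5,e2]=-e2, [e5,e3]=-2e3, [e5,e4]=e1+(7/12)e3 (extended by antisymmetry, all other basis brackets zero) satisfies the Jacobi identity, hence defines a Lie algebra structure. -/
open Matrix
open scoped Matrix

noncomputable section

abbrev V : Type := Fin 5 → ℝ

/-- standard basis of `ℝ⁵` -/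
def e (i : Fin 5) : V := Pi.single i 1

/-- the Lie bracket of the solvable Lie algebra `g~`, given by
`[e1,e2]=-e3, [e4,e2]=-e1, [e4,e1]=e2, [e5,e1]=-e1+e3, [e5,e2]=-e2, [e5,e3]=-2e3,`
`[e5,e4]=e1+(7/12)e3`, extended bilinearly and antisymmetrically. -/
def br (x y : V) : V :=
  ![-(x 3 * y 1) + x 1 * y 3 - x 4 * y 0 + x 0 * y 4 + x 4 * y 3 - x 3 * y 4,
    x 3 * y 0 - x 0 * y 3 - x 4 * y 1 + x 1 * y 4,
    -(x 0 * y 1) + x 1 * y 0 + x 4 * y 0 - x 0 * y 4 - 2 * (x 4 * y 2) + 2 * (x 2 * y 4)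
      + (7/12) * (x 4 * y 3) - (7/12) * (x 3 * y 4),
    0, 0]

/-- the indefinite metric `g~` on `ℝ⁵`. -/
def gm (x y : V) : ℝ :=
  (497/576) * x 0 * y 0 + (49/192) * x 1 * y 1 + 2 * (x 2 * y 2)
    - (7/12) * (x 0 * y 2 + x 2 * y 0) - (245/6144) * (x 3 * y 3) - (1225/6144) * (x 4 * y 4)

/-- span of brackets of elements of two subspaces -/
def brSpan (A B : Submodule ℝ V) : Submodule ℝ V :=
  Submodule.span ℝ {z : V | ∃ x ∈ A, ∃ y ∈ B, z = br x y}

/-- The bracket satisfies the Jacobi identity. -/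
theorem jacobi_identity : ∀ x y z : V,
    br (br x y) z + br (br y z) x + br (br z x) y = 0 := by
  intro x y z
  funext i
  fin_cases i <;> simp [br] <;> ring
end
end

section
/- The nilradical (maximal nilpotent ideal) of g~ equals span{e1,e2,e3}; in particular, no nonzero linear combination alpha*e4 + beta*e5 lies in a nilpotent ideal of g~. -/
open Matrix
open scoped Matrix

noncomputable section

/-- lower central series of a subspace `I` -/
def lcsOf (I : Submodule ℝ V) : ℕ → Submodule ℝ V
  | 0 => I
  | k + 1 => brSpan I (lcsOf I k)

/-- `I` is a nilpotent ideal of `g~` -/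
def IsNilpotentIdeal (I : Submodule ℝ V) : Prop :=
  (∀ x : V, ∀ y ∈ I, br x y ∈ I) ∧ ∃ k : ℕ, lcsOf I k = ⊥

/-!
`N = span{e1,e2,e3}` contains the derived algebra, hence is an ideal, and it is 2-step nilpotent:
`[N,N] ⊆ ℝ e3` and `e3` commutes with `N`. Conversely, if an ideal `I` contains `v` with
`(v4, v5) ≠ 0`, then modulo `e3` the map `ad v` acts on `⟨e1, e2⟩` as a similarity of ratio
`v4² + v5²`, so the iterated brackets `[v,[v,…,[e1,v]]]` never vanish, although the `n`-th lies in
the `n`-th term of the lower central series of `I`.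
-/

/-- `span{e1,e2,e3}` by equations: `Fin 5` is `0`-indexed, so `x 3, x 4` are the `e4, e5`
coordinates. -/
def nilrad : Submodule ℝ V where
  carrier := {x : V | x 3 = 0 ∧ x 4 = 0}
  add_mem' ha hb := ⟨by simp [ha.1, hb.1], by simp [ha.2, hb.2]⟩
  zero_mem' := ⟨rfl, rfl⟩
  smul_mem' c _ hx := ⟨by simp [hx.1], by simp [hx.2]⟩

lemma mem_nilrad {x : V} : x ∈ nilrad ↔ x 3 = 0 ∧ x 4 = 0 := Iff.rfl

lemma span_e_eq_nilrad : Submodule.span ℝ ({e 0, e 1, e 2} : Set V) = nilrad := by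
  apply le_antisymm
  · rw [Submodule.span_le]
    rintro x (rfl | rfl | rfl) <;> simp [mem_nilrad, e]
  · rintro x ⟨h3, h4⟩
    have hx : x = x 0 • e 0 + x 1 • e 1 + x 2 • e 2 := by
      funext i; fin_cases i <;> simp [e, h3, h4]
    rw [hx]
    refine add_mem (add_mem ?_ ?_) ?_ <;>
      exact Submodule.smul_mem _ _ (Submodule.subset_span (by simp))

lemma br_mem_nilrad (x y : V) : br x y ∈ nilrad := by simp [mem_nilrad, br]

lemma br_mem_brSpan {A B : Submodule ℝ V} {x y : V} (hx : x ∈ A) (hy : y ∈ B) :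
    br x y ∈ brSpan A B :=
  Submodule.subset_span ⟨x, hx, y, hy, rfl⟩

lemma brSpan_le {A B C : Submodule ℝ V} (h : ∀ x ∈ A, ∀ y ∈ B, br x y ∈ C) :
    brSpan A B ≤ C := by
  rw [brSpan, Submodule.span_le]
  rintro _ ⟨x, hx, y, hy, rfl⟩
  exact h x hx y hy

lemma br_mem_span_e_two {x y : V} (hx : x ∈ nilrad) (hy : y ∈ nilrad) : br x y ∈ ℝ ∙ e 2 := by
  obtain ⟨hx3, hx4⟩ := hx
  obtain ⟨hy3, hy4⟩ := hy
  refine Submodule.mem_span_singleton.2 ⟨br x y 2, ?_⟩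
  funext i; fin_cases i <;> simp [e, br, hx3, hx4, hy3, hy4]

lemma br_eq_zero_of_mem_span_e_two {x y : V} (hx : x ∈ nilrad) (hy : y ∈ ℝ ∙ e 2) :
    br x y = 0 := by
  obtain ⟨hx3, hx4⟩ := hx
  obtain ⟨a, rfl⟩ := Submodule.mem_span_singleton.1 hy
  funext i; fin_cases i <;> simp [e, br, hx3, hx4]

lemma lcsOf_nilrad_two : lcsOf nilrad 2 = ⊥ := by
  have h1 : lcsOf nilrad 1 ≤ ℝ ∙ e 2 :=
    brSpan_le fun _ hx _ hy => br_mem_span_e_two hx hy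
  refine eq_bot_iff.2 (brSpan_le fun x hx y hy => ?_)
  rw [br_eq_zero_of_mem_span_e_two hx (h1 hy)]
  exact zero_mem _

lemma isNilpotentIdeal_nilrad : IsNilpotentIdeal nilrad :=
  ⟨fun x y _ => br_mem_nilrad x y, 2, lcsOf_nilrad_two⟩

lemma br_sq_add_sq {v w : V} (hw : w ∈ nilrad) :
    br v w 0 ^ 2 + br v w 1 ^ 2 = (v 3 ^ 2 + v 4 ^ 2) * (w 0 ^ 2 + w 1 ^ 2) := by
  obtain ⟨hw3, hw4⟩ := hw
  simp only [br, hw3, hw4, Matrix.cons_val]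
  ring

lemma iterate_br_mem_lcsOf {I : Submodule ℝ V} {v w : V} (hv : v ∈ I) (hw : w ∈ I) (n : ℕ) :
    (br v)^[n] w ∈ lcsOf I n := by
  induction n with
  | zero => exact hw
  | succ n ih =>
    rw [Function.iterate_succ_apply']
    exact br_mem_brSpan hv ih

lemma iterate_br_sq_add_sq (v : V) (n : ℕ) :
    (br v)^[n] (br (e 0) v) 0 ^ 2 + (br v)^[n] (br (e 0) v) 1 ^ 2 =
      (v 3 ^ 2 + v 4 ^ 2) ^ (n + 1) := by
  induction n with
  | zero => simp [br, e, add_comm]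
  | succ n ih =>
    have hmem : (br v)^[n] (br (e 0) v) ∈ nilrad := by
      cases n with
      | zero => exact br_mem_nilrad _ _
      | succ n => rw [Function.iterate_succ_apply']; exact br_mem_nilrad _ _
    rw [Function.iterate_succ_apply', br_sq_add_sq hmem, ih, pow_succ' _ (n + 1)]

lemma mem_nilrad_of_isNilpotentIdeal {I : Submodule ℝ V} (hI : IsNilpotentIdeal I) {v : V}
    (hv : v ∈ I) : v ∈ nilrad := by
  obtain ⟨hideal, k, hk⟩ := hI
  have hzero : (br v)^[k] (br (e 0) v) = 0 := by
    simpa [hk] using iterate_br_mem_lcsOf hv (hideal (e 0) v hv) k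
  have hsum : (v 3 ^ 2 + v 4 ^ 2) ^ (k + 1) = 0 := by
    rw [← iterate_br_sq_add_sq, hzero]
    simp
  obtain ⟨h3, h4⟩ := (add_eq_zero_iff_of_nonneg (sq_nonneg (v 3)) (sq_nonneg (v 4))).1
    (pow_eq_zero_iff k.succ_ne_zero |>.1 hsum)
  exact ⟨pow_eq_zero_iff two_ne_zero |>.1 h3, pow_eq_zero_iff two_ne_zero |>.1 h4⟩

/-- The nilradical of `g~` equals `span{e1,e2,e3}`; in particular no nonzero combination
`α e4 + β e5` lies in a nilpotent ideal. -/
theorem nilradical_eq :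
    IsNilpotentIdeal (Submodule.span ℝ ({e 0, e 1, e 2} : Set V)) ∧
    (∀ I : Submodule ℝ V, IsNilpotentIdeal I →
      I ≤ Submodule.span ℝ ({e 0, e 1, e 2} : Set V)) ∧
    (∀ α β : ℝ, ¬(α = 0 ∧ β = 0) → ∀ I : Submodule ℝ V, IsNilpotentIdeal I →
      α • e 3 + β • e 4 ∉ I) := by
  rw [span_e_eq_nilrad]
  refine ⟨isNilpotentIdeal_nilrad, fun I hI v hv => mem_nilrad_of_isNilpotentIdeal hI hv, ?_⟩
  intro α β hαβ I hI hmem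
  apply hαβ
  simpa [mem_nilrad, e] using mem_nilrad_of_isNilpotentIdeal hI hmem
end
end

section
/- For every nonzero real numbers alpha, beta not both zero, the adjoint operator ad(alpha*e4 + beta*e5) on g~ is not a nilpotent endomorphism. -/
open Matrix
open scoped Matrix

noncomputable section

lemma br_eval (α β : ℝ) (v : V) :
    br (α • e 3 + β • e 4) v =
      ![-(α * v 1) - β * v 0 + β * v 3 - α * v 4,
        α * v 0 - β * v 1,
        β * v 0 - 2 * (β * v 2) + (7/12) * (β * v 3) - (7/12) * (α * v 4),
        0, 0] := by
  funext i
  fin_cases i <;>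
    simp [br, e, Pi.single_apply] <;> ring

/-- For `(α, β) ≠ (0,0)`, the operator `ad(α e4 + β e5)` is not nilpotent. -/
theorem ad_not_nilpotent :
    ∀ α β : ℝ, ¬(α = 0 ∧ β = 0) →
      ¬ ∃ k : ℕ, ∀ v : V, (fun w : V => br (α • e 3 + β • e 4) w)^[k] v = 0 := by
  intro α β hαβ ⟨k, hk⟩
  set f : V → V := fun w : V => br (α • e 3 + β • e 4) w with hf
  have hfe : ∀ v : V, f v =
      ![-(α * v 1) - β * v 0 + β * v 3 - α * v 4,
        α * v 0 - β * v 1,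
        β * v 0 - 2 * (β * v 2) + (7/12) * (β * v 3) - (7/12) * (α * v 4),
        0, 0] := fun v => br_eval α β v
  by_cases hβ : β = 0
  · have hα : α ≠ 0 := fun h => hαβ ⟨h, hβ⟩
    have key : ∀ n : ℕ, (f^[n] (e 0)) 3 = 0 ∧ (f^[n] (e 0)) 4 = 0 ∧
        ((f^[n] (e 0)) 0)^2 + ((f^[n] (e 0)) 1)^2 = (α^2)^n := by
      intro n
      induction n with
      | zero => simp [e, Pi.single_apply]
      | succ n ih =>
        obtain ⟨h3, h4, hs⟩ := ih
        rw [Function.iterate_succ_apply']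
        set v := f^[n] (e 0) with hv
        rw [hfe v]
        refine ⟨rfl, rfl, ?_⟩
        show (-(α * v 1) - β * v 0 + β * v 3 - α * v 4)^2
            + (α * v 0 - β * v 1)^2 = (α^2)^(n+1)
        rw [h3, h4, hβ, pow_succ (α^2) n, ← hs]; ring
    obtain ⟨_, _, hs⟩ := key k
    rw [hk (e 0)] at hs
    simp at hs
    exact pow_ne_zero k (pow_ne_zero 2 hα) hs.symm
  · have key : ∀ n : ℕ, (f^[n] (e 2)) 0 = 0 ∧ (f^[n] (e 2)) 1 = 0 ∧
        (f^[n] (e 2)) 3 = 0 ∧ (f^[n] (e 2)) 4 = 0 ∧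
        (f^[n] (e 2)) 2 = (-2*β)^n := by
      intro n
      induction n with
      | zero => simp [e, Pi.single_apply]
      | succ n ih =>
        obtain ⟨h0, h1, h3, h4, h2⟩ := ih
        rw [Function.iterate_succ_apply']
        set v := f^[n] (e 2) with hv
        rw [hfe v]
        refine ⟨?_, ?_, rfl, rfl, ?_⟩
        · show -(α * v 1) - β * v 0 + β * v 3 - α * v 4 = 0
          rw [h0, h1, h3, h4]; ring
        · show α * v 0 - β * v 1 = 0
          rw [h0, h1]; ring
        · show β * v 0 - 2 * (β * v 2) + (7/12) * (β * v 3) - (7/12) * (α * v 4)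
            = (-2*β)^(n+1)
          rw [h0, h2, h3, h4, pow_succ (-2*β) n]; ring
    obtain ⟨_, _, _, _, h2⟩ := key k
    rw [hk (e 2)] at h2
    simp at h2
    exact pow_ne_zero k (neg_ne_zero.mpr (mul_ne_zero two_ne_zero hβ)) h2.symm
end
end

section
/- There is no decomposition of the metric Lie algebra (g~, g~-metric) as an orthogonal direct sum g~ = g ⊕ a where g is a nilpotent ideal of g~ and a is an abelian Lie subalgebra of g~. -/
open Matrix
open scoped Matrix

noncomputable section

/-! Write `W := span {e₁, e₂, e₃}` (coordinates `0, 1, 2` here), which contains the derived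
algebra. In a standard decomposition `a` is abelian, so the derived algebra lies in `g` and `W ≤ g`.
For `x` with a nonzero component along `e₄, e₅`, `ad x` acts on `W / ℝ e₃ ≅ ℂ` as
multiplication by the nonzero complex number `-x₅ + i x₄`; hence nilpotency of `g` forces
`g ≤ W`. The metric is nondegenerate on `W`, so `a ⊥ W` gives `a ≤ span {e₄, e₅}`, and
complementarity makes this an equality. But `[e₅, e₄] ≠ 0`, so `a` is not abelian. -/

def vanishingOn (s : Set (Fin 5)) : Submodule ℝ V :=
  Submodule.pi s fun _ => ⊥

@[simp]
lemma mem_vanishingOn {s : Set (Fin 5)} {x : V} : x ∈ vanishingOn s ↔ ∀ i ∈ s, x i = 0 := by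
  simp [vanishingOn, Submodule.mem_pi]

lemma disjoint_vanishingOn {s t : Set (Fin 5)} (h : s ∪ t = Set.univ) :
    Disjoint (vanishingOn s) (vanishingOn t) := by
  rw [Submodule.disjoint_def]
  intro x hs ht
  funext i
  have hi : i ∈ s ∪ t := h ▸ Set.mem_univ i
  rcases hi with hi | hi
  · exact mem_vanishingOn.mp hs i hi
  · exact mem_vanishingOn.mp ht i hi

lemma br_add_left (x y z : V) : br (x + y) z = br x z + br y z := by
  funext i; fin_cases i <;> simp [br] <;> ring

lemma br_add_right (x y z : V) : br x (y + z) = br x y + br x z := by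
  funext i; fin_cases i <;> simp [br] <;> ring

lemma br_skew (x y : V) : -br y x = br x y := by
  funext i; fin_cases i <;> simp [br] <;> ring

lemma br_mem_vanishingOn (x y : V) : br x y ∈ vanishingOn {3, 4} := by
  simp [br]

lemma br_e3_e1 : br (e 3) (e 1) = -e 0 := by
  funext i; fin_cases i <;> simp [br, e]

lemma br_e3_e0 : br (e 3) (e 0) = e 1 := by
  funext i; fin_cases i <;> simp [br, e]

lemma br_e0_e1 : br (e 0) (e 1) = -e 2 := by
  funext i; fin_cases i <;> simp [br, e]

lemma br_e4_e3 : br (e 4) (e 3) = e 0 + (7 / 12 : ℝ) • e 2 := by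
  funext i; fin_cases i <;> simp [br, e]

lemma br_mem_of_sup_eq_top {I a : Submodule ℝ V} (hI : ∀ x : V, ∀ y ∈ I, br x y ∈ I)
    (ha : ∀ x ∈ a, ∀ y ∈ a, br x y = 0) (h : I ⊔ a = ⊤) (x y : V) : br x y ∈ I := by
  have hmem (z : V) : z ∈ I ⊔ a := h ▸ Submodule.mem_top
  obtain ⟨xI, hxI, xa, hxa, rfl⟩ := Submodule.mem_sup.mp (hmem x)
  obtain ⟨yI, hyI, ya, hya, rfl⟩ := Submodule.mem_sup.mp (hmem y)
  rw [br_add_right, br_add_left _ _ ya, ha xa hxa ya hya, add_zero, ← br_skew xI ya]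
  exact add_mem (hI _ _ hyI) (neg_mem (hI _ _ hxI))

lemma e_mem_of_forall_br_mem {I : Submodule ℝ V} (h : ∀ x y : V, br x y ∈ I) :
    ∀ i ∈ ({0, 1, 2} : Set (Fin 5)), e i ∈ I := by
  rintro i (rfl | rfl | rfl)
  · simpa [br_e3_e1] using neg_mem (h (e 3) (e 1))
  · simpa [br_e3_e0] using h (e 3) (e 0)
  · simpa [br_e0_e1] using neg_mem (h (e 0) (e 1))

def planeCoord (w : V) : ℂ := ⟨w 0, w 1⟩

lemma planeCoord_br (x : V) {w : V} (hw : w ∈ vanishingOn {3, 4}) :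
    planeCoord (br x w) = ⟨-x 4, x 3⟩ * planeCoord w := by
  obtain ⟨h3, h4⟩ : w 3 = 0 ∧ w 4 = 0 := by simpa using hw
  apply Complex.ext <;> simp [planeCoord, br, h3, h4] <;> ring

lemma exists_mem_lcsOf_planeCoord_eq {I : Submodule ℝ V} {x : V} (h0 : e 0 ∈ I) (h1 : e 1 ∈ I)
    (hx : x ∈ I) (hζ : (⟨-x 4, x 3⟩ : ℂ) ≠ 0) (n : ℕ) (c : ℂ) :
    ∃ w ∈ lcsOf I n, w ∈ vanishingOn {3, 4} ∧ planeCoord w = c := by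
  induction n generalizing c with
  | zero =>
    refine ⟨c.re • e 0 + c.im • e 1, add_mem (I.smul_mem _ h0) (I.smul_mem _ h1), ?_, ?_⟩
    · simp [e]
    · apply Complex.ext <;> simp [planeCoord, e]
  | succ n ih =>
    obtain ⟨w, hw, hw34, hwc⟩ := ih (c / ⟨-x 4, x 3⟩)
    refine ⟨br x w, Submodule.subset_span ⟨x, hx, w, hw, rfl⟩, br_mem_vanishingOn x w, ?_⟩
    rw [planeCoord_br x hw34, hwc, mul_div_cancel₀ _ hζ]

lemma le_vanishingOn_of_lcsOf_eq_bot {I : Submodule ℝ V} {k : ℕ} (h0 : e 0 ∈ I)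
    (h1 : e 1 ∈ I) (hk : lcsOf I k = ⊥) : I ≤ vanishingOn {3, 4} := by
  intro x hx
  by_contra hx34
  have hζ : (⟨-x 4, x 3⟩ : ℂ) ≠ 0 := by
    intro hζ
    apply hx34
    simp_all [Complex.ext_iff]
  obtain ⟨w, hw, -, hw1⟩ := exists_mem_lcsOf_planeCoord_eq h0 h1 hx hζ k 1
  rw [hk, Submodule.mem_bot] at hw
  simp [hw, planeCoord, Complex.ext_iff] at hw1

lemma mem_vanishingOn_of_gm_e_eq_zero {y : V}
    (h : ∀ i ∈ ({0, 1, 2} : Set (Fin 5)), gm (e i) y = 0) : y ∈ vanishingOn {0, 1, 2} := by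
  have h0 : 497 / 576 * y 0 - 7 / 12 * y 2 = 0 := by simpa [gm, e] using h 0 (by simp)
  have h1 : 49 / 192 * y 1 = 0 := by simpa [gm, e] using h 1 (by simp)
  have h2 : 2 * y 2 - 7 / 12 * y 0 = 0 := by simpa [gm, e] using h 2 (by simp)
  simp only [mem_vanishingOn, Set.mem_insert_iff, Set.mem_singleton_iff, forall_eq_or_imp,
    forall_eq]
  refine ⟨by linarith, by linarith, by linarith⟩

/-- The metric Lie algebra `(g~, g~)` admits no standard decomposition: there is no
orthogonal direct sum `g~ = g ⊕ a` with `g` a nilpotent ideal and `a` an abelian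
subalgebra. -/
theorem no_standard_decomposition :
    ¬ ∃ (gI a : Submodule ℝ V), IsNilpotentIdeal gI ∧
      (∀ x ∈ a, ∀ y ∈ a, br x y ∈ a) ∧
      (∀ x ∈ a, ∀ y ∈ a, br x y = 0) ∧
      IsCompl gI a ∧
      (∀ x ∈ gI, ∀ y ∈ a, gm x y = 0) := by
  rintro ⟨gI, a, ⟨hideal, k, hk⟩, -, habel, hcompl, horth⟩
  have he := e_mem_of_forall_br_mem (br_mem_of_sup_eq_top hideal habel hcompl.sup_eq_top)
  have hgI : gI ≤ vanishingOn {3, 4} :=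
    le_vanishingOn_of_lcsOf_eq_bot (he 0 (by simp)) (he 1 (by simp)) hk
  have ha : a ≤ vanishingOn {0, 1, 2} := fun y hy =>
    mem_vanishingOn_of_gm_e_eq_zero fun i hi => horth _ (he i hi) y hy
  have hdisj : Disjoint gI (vanishingOn {0, 1, 2}) :=
    (disjoint_vanishingOn (by ext i; fin_cases i <;> simp)).mono_left hgI
  have ha_eq : a = vanishingOn {0, 1, 2} :=
    eq_of_le_of_inf_le_of_le_sup ha (hdisj.symm.eq_bot ▸ bot_le)
      (hcompl.symm.sup_eq_top ▸ le_top)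
  have h43 := congrFun (habel (e 4) (by simp [ha_eq, e]) (e 3) (by simp [ha_eq, e])) 0
  rw [br_e4_e3] at h43
  simp [e] at h43
end
end

section
/- Every nilpotent ideal g of g~ on which the restriction of the metric g~ is nondegenerate has orthogonal complement containing span{e4,e5}, and hence the orthogonal complement is not abelian. -/
open Matrix
open scoped Matrix

noncomputable section

lemma br_three (x y : V) : br x y 3 = 0 := by simp [br]
lemma br_four (x y : V) : br x y 4 = 0 := by simp [br]

lemma mem_nilrad_s12 (I : Submodule ℝ V) (hI : IsNilpotentIdeal I) :
    ∀ w ∈ I, w 3 = 0 ∧ w 4 = 0 := by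
  obtain ⟨hideal, k, hk⟩ := hI
  intro w hw
  by_contra hcon
  set a : ℝ := w 4 with ha
  set b : ℝ := w 3 with hb
  have hab : 0 < a ^ 2 + b ^ 2 := by
    rcases not_and_or.mp hcon with h | h <;> · have := sq_pos_of_ne_zero h; positivity
  set z : ℕ → V := fun n => (br w)^[n] (br (e 0) w) with hz
  have hz0 : z 0 = br (e 0) w := rfl
  have hzs : ∀ n, z (n + 1) = br w (z n) := by
    intro n
    simp [hz, Function.iterate_succ_apply']
  have key : ∀ n, z n ∈ lcsOf I n ∧ z n 3 = 0 ∧ z n 4 = 0 ∧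
      (z n 0) ^ 2 + (z n 1) ^ 2 = (a ^ 2 + b ^ 2) ^ (n + 1) := by
    intro n
    induction n with
    | zero =>
      refine ⟨hideal _ _ hw, br_three _ _, br_four _ _, ?_⟩
      have h0 : z 0 0 = a := by simp [hz0, br, e, ha]
      have h1 : z 0 1 = -b := by simp [hz0, br, e, hb]
      rw [h0, h1]; ring
    | succ n ih =>
      obtain ⟨hmem, h3, h4, hsum⟩ := ih
      have e0 : z (n + 1) 0 = -(b * z n 1) - a * z n 0 := by
        rw [hzs]; simp [br, h3, h4, ha, hb]
      have e1 : z (n + 1) 1 = b * z n 0 - a * z n 1 := by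
        rw [hzs]; simp [br, h3, h4, ha, hb]
      refine ⟨?_, by rw [hzs]; exact br_three _ _, by rw [hzs]; exact br_four _ _, ?_⟩
      · rw [hzs]
        exact Submodule.subset_span ⟨w, hw, z n, hmem, rfl⟩
      · rw [e0, e1]
        have : (-(b * z n 1) - a * z n 0) ^ 2 + (b * z n 0 - a * z n 1) ^ 2
            = (a ^ 2 + b ^ 2) * ((z n 0) ^ 2 + (z n 1) ^ 2) := by ring
        rw [this, hsum, ← pow_succ']
  obtain ⟨hmem, _, _, hsum⟩ := key k
  rw [hk] at hmem
  simp only [Submodule.mem_bot] at hmem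
  rw [hmem] at hsum
  simp at hsum
  nlinarith [pow_pos hab (k + 1)]

/-- Every nilpotent ideal on which the metric is nondegenerate has orthogonal complement
containing `span{e4,e5}`, hence nonabelian orthogonal complement. -/
theorem perp_of_nilpotent_ideal :
    ∀ gI : Submodule ℝ V, IsNilpotentIdeal gI →
      (∀ v ∈ gI, (∀ w ∈ gI, gm v w = 0) → v = 0) →
      (∀ v ∈ Submodule.span ℝ ({e 3, e 4} : Set V), ∀ w ∈ gI, gm v w = 0) ∧
      (∃ x y : V, (∀ w ∈ gI, gm x w = 0) ∧ (∀ w ∈ gI, gm y w = 0) ∧ br x y ≠ 0) := by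
  intro gI hI _hnd
  have hnil := mem_nilrad_s12 gI hI
  constructor
  · intro v hv w hw
    obtain ⟨h3, h4⟩ := hnil w hw
    rw [Submodule.mem_span_pair] at hv
    obtain ⟨c, d, rfl⟩ := hv
    simp [gm, e, Pi.single_apply, h3, h4]
  · refine ⟨e 3, e 4, ?_, ?_, ?_⟩
    · intro w hw
      obtain ⟨h3, _⟩ := hnil w hw
      simp [gm, e, Pi.single_apply, h3]
    · intro w hw
      obtain ⟨_, h4⟩ := hnil w hw
      simp [gm, e, Pi.single_apply, h4]
    · intro h
      have := congrFun h 0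
      simp [br, e, Pi.single_apply] at this
end
end
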